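/- Let G be the weighted multigraph with two vertices joined by three parallel edges of positive lengths ℓ_1, ℓ_2, ℓ_3, polarized by q ≡ 0 (the unique irreducible cubic polarized graph of genus 2). Then φ(G) ≥ (1/27)·(ℓ_1 + ℓ_2 + ℓ_3). -/

import Mathlib

open scoped Classical
open Matrix Filter Topology

/-- A weighted multigraph with vertex type `V` and edge index type `E`:
each edge is assigned an (ordered representative of an unordered) pair of endpoints. -/
structure WMG (V E : Type) where
  ends : E → V × V

namespace WMG

variable {V E : Type} [Fintype V] [DecidableEq V] [Fintype E] [DecidableEq E]

/-- `a` and `b` are joined by some edge belonging to `S`. -/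
def Step (G : WMG V E) (S : Set E) (a b : V) : Prop :=
  ∃ k ∈ S, G.ends k = (a, b) ∨ G.ends k = (b, a)

/-- Any two vertices can be joined by a walk using only edges from `S`. -/
def ConnectedVia (G : WMG V E) (S : Set E) : Prop :=
  ∀ a b : V, Relation.ReflTransGen (G.Step S) a b

/-- `G` is connected. -/
def Connected (G : WMG V E) : Prop := G.ConnectedVia Set.univ

/-- A set `T` of edges is a spanning tree: it has `#V - 1` edges and connects all vertices. -/
def IsSpanningTree (G : WMG V E) (T : Finset E) : Prop :=
  T.card + 1 = Fintype.card V ∧ G.ConnectedVia ↑T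

/-- `η_G(ℓ) = Σ_{T spanning tree} Π_{k ∉ T} ℓ_k`. -/
noncomputable def eta (G : WMG V E) (ℓ : E → ℝ) : ℝ :=
  ∑ T : Finset E, if G.IsSpanningTree T then ∏ k ∈ Tᶜ, ℓ k else 0

/-- The weighted Laplacian matrix of `G`. -/
noncomputable def lap (G : WMG V E) (ℓ : E → ℝ) : Matrix V V ℝ :=
  Matrix.of fun a b =>
    if a = b then
      ∑ k : E, if ((G.ends k).1 = a ∨ (G.ends k).2 = a) ∧ (G.ends k).1 ≠ (G.ends k).2
        then (ℓ k)⁻¹ else 0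
    else
      - ∑ k : E, if G.ends k = (a, b) ∨ G.ends k = (b, a) then (ℓ k)⁻¹ else 0

/-- The standard basis vector (point mass) at a vertex. -/
def delta (a : V) : V → ℝ := fun x => if x = a then 1 else 0

/-- Effective resistance `r(a,b)`: the entry at `a` of the unique solution `h` of
`Q^{(b)} h = u_a` (the Laplacian with row and column `b` deleted).  Equivalently, writing
`h̃` for the extension of `h` by `h̃ b = 0`, it is the entry at `a` of the unique `v` with
`Q v = δ_a - δ_b` and `v b = 0` (the two systems have the same solutions since all row and
column sums of `Q` vanish).  We set `r(a,a) = 0`; this is automatic in the connected case. -/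
noncomputable def res (G : WMG V E) (ℓ : E → ℝ) (a b : V) : ℝ :=
  if h : ∃! v : V → ℝ, G.lap ℓ *ᵥ v = delta a - delta b ∧ v b = 0
  then h.exists.choose a else 0

/-- The valence of a vertex (loop edges counted twice). -/
def valence (G : WMG V E) (a : V) : ℕ :=
  ∑ k : E, ((if (G.ends k).1 = a then 1 else 0) + (if (G.ends k).2 = a then 1 else 0))

/-- The genus of the polarized graph `(G, q)`: `g = #E - #V + 1 + Σ_a q(a)`. -/
def genus (G : WMG V E) (q : V → ℕ) : ℤ :=
  (Fintype.card E : ℤ) - (Fintype.card V : ℤ) + 1 + ∑ a, (q a : ℤ)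

/-- The canonical divisor `K(a) = 2 q(a) + v(a) - 2`, as a real number. -/
noncomputable def Kdiv (G : WMG V E) (q : V → ℕ) (a : V) : ℝ :=
  2 * (q a : ℝ) + (G.valence a : ℝ) - 2

/-- `F(e_k) = 1 - r(e_k)/ℓ_k` where `r(e_k)` is the resistance between the endpoints. -/
noncomputable def Fres (G : WMG V E) (ℓ : E → ℝ) (k : E) : ℝ :=
  1 - G.res ℓ (G.ends k).1 (G.ends k).2 / ℓ k

/-- Zhang's invariant `ε` of the polarized metric graph, via the paper's explicit formula. -/
noncomputable def epsilon (G : WMG V E) (q : V → ℕ) (ℓ : E → ℝ) : ℝ :=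
  (1 / (G.genus q : ℝ)) * ∑ a, ∑ b, (q a : ℝ) * G.Kdiv q b * G.res ℓ a b
  + (((G.genus q : ℝ) - 1) / (3 * (G.genus q : ℝ))) * ∑ k, (G.Fres ℓ k) ^ 2 * ℓ k
  + (1 / (2 * (G.genus q : ℝ))) * ∑ a, G.Kdiv q a *
      ∑ k, G.Fres ℓ k * (G.res ℓ a (G.ends k).1 + G.res ℓ a (G.ends k).2)

/-- `r(K, K) = Σ_{a,b} K(a) K(b) r(a,b)`. -/
noncomputable def rKK (G : WMG V E) (q : V → ℕ) (ℓ : E → ℝ) : ℝ :=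
  ∑ a, ∑ b, G.Kdiv q a * G.Kdiv q b * G.res ℓ a b

/-- Zhang's invariant `φ` of the polarized metric graph, via the paper's explicit formula
`φ = ((5g-2)/(4(g-1))) ε - (3/(8(g-1))) r(K,K) - ℓ(G)/4`. -/
noncomputable def phi (G : WMG V E) (q : V → ℕ) (ℓ : E → ℝ) : ℝ :=
  ((5 * (G.genus q : ℝ) - 2) / (4 * ((G.genus q : ℝ) - 1))) * G.epsilon q ℓ
  - (3 / (8 * ((G.genus q : ℝ) - 1))) * G.rKK q ℓ
  - (∑ k, ℓ k) / 4

/-- The map on vertices identifying `b` with `a` (realized on the subtype omitting `b`). -/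
def fuseV (a b : V) (hab : a ≠ b) (x : V) : {y : V // y ≠ b} :=
  if h : x = b then ⟨a, hab⟩ else ⟨x, h⟩

/-- The fusion `G'` of two distinct vertices `a, b` of `G`: identify `a` and `b`,
keeping all edges and lengths. -/
def fuse (G : WMG V E) (a b : V) (hab : a ≠ b) : WMG {y : V // y ≠ b} E :=
  ⟨fun k => (fuseV a b hab (G.ends k).1, fuseV a b hab (G.ends k).2)⟩

/-- The contraction `G/e` of a non-loop edge: identify the two endpoints of `e`,
delete `e`, and keep all other edges. -/
def contract (G : WMG V E) (k0 : E) (hk : (G.ends k0).1 ≠ (G.ends k0).2) :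
    WMG {y : V // y ≠ (G.ends k0).2} {k : E // k ≠ k0} :=
  ⟨fun k => (fuseV (G.ends k0).1 (G.ends k0).2 hk (G.ends k.1).1,
             fuseV (G.ends k0).1 (G.ends k0).2 hk (G.ends k.1).2)⟩

end WMG

/-- The `i`-th elementary symmetric polynomial of the family `ℓ`. -/
noncomputable def esymE {E : Type} [Fintype E] [DecidableEq E] (i : ℕ) (ℓ : E → ℝ) : ℝ :=
  ∑ s ∈ Finset.powersetCard i (Finset.univ : Finset E), ∏ k ∈ s, ℓ k

/-- The theta graph: two vertices joined by three parallel edges. -/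
def thetaGraph : WMG (Fin 2) (Fin 3) := ⟨fun _ => ((0 : Fin 2), (1 : Fin 2))⟩

/-!
The two vertices of the theta graph are joined by three parallel edges, so the effective
resistance between them is `r = (Σ ℓ_k⁻¹)⁻¹`, every vertex has `K = 1`, and the genus is `2`.
Substituting into the formula for `φ` and using `r Σ ℓ_k⁻¹ = 1` gives `φ = ℓ(G)/12 - 5r/12`.
By Cauchy–Schwarz (AM–HM), `9 r ≤ ℓ(G)`, hence `φ ≥ ℓ(G)/12 - 5ℓ(G)/108 = ℓ(G)/27`.
-/

namespace WMG

section Resistance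

variable {V E : Type} [Fintype V] [DecidableEq V] [Fintype E]

lemma res_eq_of_unique {G : WMG V E} {ℓ : E → ℝ} {a b : V} {v : V → ℝ}
    (hv : G.lap ℓ *ᵥ v = delta a - delta b ∧ v b = 0)
    (huniq : ∀ w, G.lap ℓ *ᵥ w = delta a - delta b ∧ w b = 0 → w = v) :
    G.res ℓ a b = v a := by
  have h : ∃! v : V → ℝ, G.lap ℓ *ᵥ v = delta a - delta b ∧ v b = 0 := ⟨v, hv, huniq⟩
  rw [res, dif_pos h, huniq _ h.exists.choose_spec]

-- The zero vector solves the defining system, so either it is the unique solution or `res`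
-- takes its junk value `0`.
@[simp]
lemma res_self (G : WMG V E) (ℓ : E → ℝ) (a : V) : G.res ℓ a a = 0 := by
  by_cases h : ∃! v : V → ℝ, G.lap ℓ *ᵥ v = delta a - delta a ∧ v a = 0
  · rw [res, dif_pos h, h.unique h.exists.choose_spec (y₂ := 0) (by simp)]
    rfl
  · rw [res, dif_neg h]

end Resistance

section ParallelEdges

variable {E : Type} [Fintype E] {G : WMG (Fin 2) E} (ℓ : E → ℝ)

lemma lap_mulVec_of_parallel (hG : ∀ k, G.ends k = (0, 1)) (v : Fin 2 → ℝ) (i : Fin 2) :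
    (G.lap ℓ *ᵥ v) i = (∑ k, (ℓ k)⁻¹) * (v i - v i.rev) := by
  fin_cases i <;> simp [mulVec, dotProduct, Fin.sum_univ_two, lap, hG] <;> ring

lemma res_rev_of_parallel (hG : ∀ k, G.ends k = (0, 1)) (hℓ : ∑ k, (ℓ k)⁻¹ ≠ 0) (a : Fin 2) :
    G.res ℓ a a.rev = (∑ k, (ℓ k)⁻¹)⁻¹ := by
  refine (res_eq_of_unique (v := delta a * fun _ => (∑ k, (ℓ k)⁻¹)⁻¹) ⟨?_, ?_⟩ ?_).trans ?_
  · ext i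
    rw [lap_mulVec_of_parallel ℓ hG]
    fin_cases a <;> fin_cases i <;> simp [delta, hℓ]
  · fin_cases a <;> simp [delta]
  · intro w ⟨hw, hwa⟩
    have hwa' : w a = (∑ k, (ℓ k)⁻¹)⁻¹ := by
      have h := congrFun hw a
      rw [lap_mulVec_of_parallel ℓ hG, hwa, sub_zero] at h
      refine eq_inv_of_mul_eq_one_right (h.trans ?_)
      fin_cases a <;> simp [delta]
    ext i
    fin_cases a <;> fin_cases i <;> simp_all [delta]
  · simp [delta]

end ParallelEdges

end WMG

lemma sq_card_le_sum_mul_sum_inv {E : Type} [Fintype E] (ℓ : E → ℝ) (hℓ : ∀ k, 0 < ℓ k) :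
    (Fintype.card E : ℝ) ^ 2 ≤ (∑ k, ℓ k) * ∑ k, (ℓ k)⁻¹ := by
  rcases isEmpty_or_nonempty E with hE | hE
  · simp
  have h := Finset.sq_sum_div_le_sum_sq_div Finset.univ (fun _ => (1 : ℝ)) fun k _ => hℓ k
  simp only [Finset.sum_const, Finset.card_univ, nsmul_eq_mul, mul_one, one_pow, one_div] at h
  rwa [div_le_iff₀' (Finset.sum_pos (fun k _ => hℓ k) Finset.univ_nonempty)] at h

lemma thetaGraph_phi (ℓ : Fin 3 → ℝ) (hℓ : ∀ k, 0 < ℓ k) :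
    thetaGraph.phi (fun _ => 0) ℓ = (∑ k, ℓ k) / 12 - 5 * (∑ k, (ℓ k)⁻¹)⁻¹ / 12 := by
  have hc : ∑ k, (ℓ k)⁻¹ ≠ 0 :=
    (Finset.sum_pos (fun k _ => inv_pos.2 (hℓ k)) Finset.univ_nonempty).ne'
  have hends : ∀ k, thetaGraph.ends k = (0, 1) := fun _ => rfl
  have h01 : thetaGraph.res ℓ 0 1 = (∑ k, (ℓ k)⁻¹)⁻¹ := WMG.res_rev_of_parallel ℓ hends hc 0
  have h10 : thetaGraph.res ℓ 1 0 = (∑ k, (ℓ k)⁻¹)⁻¹ := WMG.res_rev_of_parallel ℓ hends hc 1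
  have hr := inv_mul_cancel₀ hc
  simp only [WMG.phi, WMG.epsilon, WMG.rKK, WMG.genus, WMG.Kdiv, WMG.valence, WMG.Fres, hends,
    Fin.sum_univ_two, Fin.sum_univ_three, h01, h10, WMG.res_self] at hr ⊢
  generalize ((ℓ 0)⁻¹ + (ℓ 1)⁻¹ + (ℓ 2)⁻¹)⁻¹ = r at hr ⊢
  have e0 := mul_inv_cancel₀ (hℓ 0).ne'
  have e1 := mul_inv_cancel₀ (hℓ 1).ne'
  have e2 := mul_inv_cancel₀ (hℓ 2).ne'
  norm_num
  linear_combination (-2 / 3 * r) * hr + (r ^ 2 / 3 * (ℓ 0)⁻¹ - 2 / 3 * r) * e0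
    + (r ^ 2 / 3 * (ℓ 1)⁻¹ - 2 / 3 * r) * e1 + (r ^ 2 / 3 * (ℓ 2)⁻¹ - 2 / 3 * r) * e2

/-- Let `G` be the graph with two vertices joined by three parallel edges of positive
lengths `ℓ_1, ℓ_2, ℓ_3`, polarized by `q ≡ 0` (the unique irreducible cubic polarized
graph of genus 2).  Then `φ(G) ≥ (1/27)(ℓ_1 + ℓ_2 + ℓ_3)`. -/
theorem stmt_15 (ℓ : Fin 3 → ℝ) (hℓ : ∀ k, 0 < ℓ k) :
    thetaGraph.phi (fun _ => 0) ℓ ≥ (1 / 27 : ℝ) * (ℓ 0 + ℓ 1 + ℓ 2) := by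
  have hc : 0 < ∑ k, (ℓ k)⁻¹ := Finset.sum_pos (fun k _ => inv_pos.2 (hℓ k)) Finset.univ_nonempty
  have hres : 9 * (∑ k, (ℓ k)⁻¹)⁻¹ ≤ ∑ k, ℓ k := by
    rw [← div_eq_mul_inv, div_le_iff₀ hc]
    simpa [show (3 : ℝ) ^ 2 = 9 by norm_num] using sq_card_le_sum_mul_sum_inv ℓ hℓ
  rw [thetaGraph_phi ℓ hℓ, ← Fin.sum_univ_three]
  linarith
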